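/- For a graph G with chromatic polynomial χ_G, the evaluation (−1)^{r(G)} χ̃_G(0) is a nonnegative integer equal to the number of spanning forests of G (with k(G) trees spanning the components) containing no broken circuit, where χ̃_G(t) = χ_G(t)/t^{k(G)} and r(G) = n − k(G). -/

import Mathlib

/-!
Inclusion–exclusion over monochromatic edges gives `χ_G(t) = ∑_{A ⊆ E} (-1)^|A| t^c(A)`, where
`c(A)` is the number of components of the spanning subgraph `(V, A)`. The functions constant on
these components form the kernel of the incidence vectors `e_a - e_b` of the edges of `A`, so by
rank–nullity `c(A) = n - r(A)`, with `r` the rank in the linear (cycle) matroid.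

Whitney's argument then cancels every `A` containing a broken circuit: let `e` be the least
element that is the largest element of a circuit `C` with `C \ {e} ⊆ A`. Toggling `e` in `A`
keeps `e` least with this property and, since `e` lies in the span of `C \ {e}`, keeps the rank,
while it flips the sign. The surviving sets contain no broken circuit, hence are independent, so
`χ_G(t) = ∑_{A nbc} (-1)^|A| t^(n - |A|)`, and the coefficient of `t^k(G)` counts the nbc sets of
size `r(G) = n - k(G)`, i.e. the nbc bases, each with sign `(-1)^r(G)`.
-/

open Polynomial Finset

variable {ι : Type*} {V : Type*} [AddCommGroup V] [Module ℂ V]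

/-- Independence in the linear matroid of a vector configuration `v`. -/
def LinIndep (v : ι → V) (S : Finset ι) : Prop :=
  LinearIndependent ℂ (fun x : S => v x)

/-- A circuit of the linear matroid of `v`: a minimal dependent set. -/
def LinCircuit (v : ι → V) (C : Finset ι) : Prop :=
  ¬ LinIndep v C ∧ ∀ D : Finset ι, D ⊂ C → LinIndep v D

/-- A base of the linear matroid of `v`: a maximal independent set. -/
def LinBase (v : ι → V) (S : Finset ι) : Prop :=
  LinIndep v S ∧ ∀ T : Finset ι, S ⊆ T → LinIndep v T → T = S

/-- A broken circuit with respect to a linear order `lo` on the index set: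
a circuit with its largest element removed. -/
def LinBrokenCircuit (v : ι → V) (lo : LinearOrder ι) (B : Finset ι) : Prop :=
  ∃ C : Finset ι, LinCircuit v C ∧ ∃ u ∈ C, (∀ w ∈ C, lo.le w u) ∧ B = C.erase u

/-- `S` contains no broken circuit with respect to `lo`. -/
def LinNoBrokenCircuit (v : ι → V) (lo : LinearOrder ι) (S : Finset ι) : Prop :=
  ∀ B : Finset ι, LinBrokenCircuit v lo B → ¬ B ⊆ S

open scoped symmDiff
open Module Submodule

theorem Finset.erase_symmDiff_singleton {α : Type*} [DecidableEq α] (A : Finset α) (e : α) :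
    (A ∆ {e}).erase e = A.erase e := by
  ext x
  by_cases hx : x = e <;> simp [mem_symmDiff, hx]

theorem Finset.neg_one_pow_card_symmDiff_singleton {α R : Type*} [DecidableEq α] [Ring R]
    (A : Finset α) (e : α) : (-1 : R) ^ #(A ∆ {e}) = -(-1) ^ #A := by
  by_cases he : e ∈ A
  · have hA : A ∆ {e} = A.erase e := by
      ext x; by_cases hx : x = e <;> simp [mem_symmDiff, hx, he]
    rw [hA, ← card_erase_add_one he, pow_succ, mul_neg_one, neg_neg]
  · have hA : A ∆ {e} = insert e A := by
      ext x; by_cases hx : x = e <;> simp [mem_symmDiff, hx, he]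
    rw [hA, card_insert_of_notMem he, pow_succ, mul_neg_one]

noncomputable def linRk (v : ι → V) (A : Finset ι) : ℕ :=
  Set.finrank ℂ (v '' A)

section LinearMatroid

variable {v : ι → V}

theorem linIndep_iff_linearIndepOn {A : Finset ι} : LinIndep v A ↔ LinearIndepOn ℂ v ↑A :=
  Iff.rfl

theorem linIndep_iff_linRk_eq_card {A : Finset ι} : LinIndep v A ↔ linRk v A = #A := by
  rw [LinIndep, linearIndependent_iff_card_eq_finrank_span, linRk, Set.image_eq_range,
    Fintype.card_coe, eq_comm]
  rfl

theorem linRk_le_linRk_of_span_le {A B : Finset ι}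
    (h : span ℂ (v '' ↑A) ≤ span ℂ (v '' ↑B)) : linRk v A ≤ linRk v B :=
  have := FiniteDimensional.span_of_finite ℂ ((B.finite_toSet).image v)
  Submodule.finrank_mono h

theorem linRk_mono {A B : Finset ι} (h : A ⊆ B) : linRk v A ≤ linRk v B :=
  linRk_le_linRk_of_span_le (span_mono (Set.image_mono (coe_subset.2 h)))

theorem linRk_eq_linRk_erase [DecidableEq ι] {A : Finset ι} {e : ι}
    (h : v e ∈ span ℂ (v '' ↑(A.erase e))) : linRk v A = linRk v (A.erase e) := by
  by_cases he : e ∈ A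
  · conv_lhs => rw [← insert_erase he]
    rw [linRk, Set.finrank, coe_insert, Set.image_insert_eq, span_insert_eq_span h, linRk,
      Set.finrank]
  · rw [erase_eq_of_notMem he]

theorem LinIndep.linBase_iff [Fintype ι] {S : Finset ι} (hS : LinIndep v S) :
    LinBase v S ↔ #S = linRk v univ := by
  classical
  refine ⟨fun ⟨_, hmax⟩ => ?_, fun hcard => ⟨hS, fun T hST hT => ?_⟩⟩
  · have hspan : span ℂ (v '' ↑(univ : Finset ι)) ≤ span ℂ (v '' S) := by
      refine span_le.2 fun _ ⟨j, _, hj⟩ => hj ▸ by_contra fun hjS => ?_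
      have hjS' : j ∉ S := fun h => hjS (subset_span ⟨j, h, rfl⟩)
      have hins : LinIndep v (insert j S) := by
        rw [linIndep_iff_linearIndepOn, coe_insert]
        exact (linearIndepOn_insert (by exact_mod_cast hjS')).2 ⟨hS, hjS⟩
      exact hjS' (hmax _ (subset_insert j S) hins ▸ mem_insert_self j S)
    rw [← linIndep_iff_linRk_eq_card.1 hS]
    exact le_antisymm (linRk_mono (subset_univ S)) (linRk_le_linRk_of_span_le hspan)
  · refine (eq_of_subset_of_card_le hST ?_).symm
    rw [← linIndep_iff_linRk_eq_card.1 hT, hcard]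
    exact linRk_mono (subset_univ T)

theorem exists_linCircuit_subset {S : Finset ι} (h : ¬ LinIndep v S) :
    ∃ C ⊆ S, LinCircuit v C := by
  induction S using Finset.strongInduction with
  | H S ih =>
    by_cases hmin : ∀ D, D ⊂ S → LinIndep v D
    · exact ⟨S, Subset.rfl, h, hmin⟩
    · push Not at hmin
      obtain ⟨D, hDS, hD⟩ := hmin
      obtain ⟨C, hCD, hC⟩ := ih D hDS hD
      exact ⟨C, hCD.trans hDS.subset, hC⟩

theorem LinCircuit.nonempty {C : Finset ι} (hC : LinCircuit v C) : C.Nonempty := by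
  rw [nonempty_iff_ne_empty]
  rintro rfl
  exact hC.1 (by simp [linIndep_iff_linearIndepOn])

theorem LinCircuit.mem_span_erase [DecidableEq ι] {C : Finset ι} (hC : LinCircuit v C) {u : ι}
    (hu : u ∈ C) : v u ∈ span ℂ (v '' ↑(C.erase u)) := by
  by_contra h
  have hins : LinearIndepOn ℂ v (insert u ↑(C.erase u)) :=
    (linearIndepOn_insert (by simp)).2
      ⟨linIndep_iff_linearIndepOn.1 (hC.2 _ (erase_ssubset hu)), h⟩
  rw [← coe_insert, insert_erase hu] at hins
  exact hC.1 hins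

end LinearMatroid

section BrokenCircuit

variable [lo : LinearOrder ι] {v : ι → V}

theorem LinNoBrokenCircuit.linIndep {A : Finset ι} (h : LinNoBrokenCircuit v lo A) :
    LinIndep v A := by
  by_contra hA
  obtain ⟨C, hCA, hC⟩ := exists_linCircuit_subset hA
  obtain ⟨e, heC, hmax⟩ := C.exists_max_image id hC.nonempty
  exact h _ ⟨C, hC, e, heC, hmax, rfl⟩ ((erase_subset e C).trans hCA)

variable [Fintype ι] (v)

open scoped Classical in
noncomputable def brokenCircuitTops (A : Finset ι) : Finset ι :=
  {e | ∃ C, LinCircuit v C ∧ e ∈ C ∧ (∀ w ∈ C, w ≤ e) ∧ C.erase e ⊆ A}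

variable {v}

theorem mem_brokenCircuitTops {A : Finset ι} {e : ι} :
    e ∈ brokenCircuitTops v A ↔
      ∃ C, LinCircuit v C ∧ e ∈ C ∧ (∀ w ∈ C, w ≤ e) ∧ C.erase e ⊆ A := by
  classical
  simp [brokenCircuitTops]

theorem linNoBrokenCircuit_iff_brokenCircuitTops_eq_empty {A : Finset ι} :
    LinNoBrokenCircuit v lo A ↔ brokenCircuitTops v A = ∅ := by
  simp only [eq_empty_iff_forall_notMem, mem_brokenCircuitTops, LinNoBrokenCircuit,
    LinBrokenCircuit]
  constructor
  · rintro h e ⟨C, hC, heC, hmax, hCA⟩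
    exact h _ ⟨C, hC, e, heC, hmax, rfl⟩ hCA
  · rintro h _ ⟨C, hC, e, heC, hmax, rfl⟩ hCA
    exact h e ⟨C, hC, heC, hmax, hCA⟩

theorem mem_brokenCircuitTops_symmDiff {A : Finset ι} {e : ι} (he : e ∈ brokenCircuitTops v A) :
    e ∈ brokenCircuitTops v (A ∆ {e}) := by
  obtain ⟨C, hC, heC, hmax, hCA⟩ := mem_brokenCircuitTops.1 he
  refine mem_brokenCircuitTops.2 ⟨C, hC, heC, hmax, fun x hx => ?_⟩
  rw [mem_symmDiff]
  exact Or.inl ⟨hCA hx, by simpa using (ne_of_mem_erase hx)⟩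

theorem isLeast_brokenCircuitTops_symmDiff {A : Finset ι} {e : ι}
    (he : IsLeast (brokenCircuitTops v A : Set ι) e) :
    IsLeast (brokenCircuitTops v (A ∆ {e}) : Set ι) e := by
  refine ⟨mem_brokenCircuitTops_symmDiff he.1, fun f hf => ?_⟩
  obtain ⟨C, hC, hfC, hmax, hCA⟩ := mem_brokenCircuitTops.1 hf
  by_cases heC : e ∈ C
  · exact hmax e heC
  · refine he.2 (mem_brokenCircuitTops.2 ⟨C, hC, hfC, hmax, fun x hx => ?_⟩)
    have hxe : x ≠ e := fun h => heC (h ▸ mem_of_mem_erase hx)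
    simpa [mem_symmDiff, hxe] using hCA hx

theorem linRk_symmDiff_singleton {A : Finset ι} {e : ι} (he : e ∈ brokenCircuitTops v A) :
    linRk v (A ∆ {e}) = linRk v A := by
  obtain ⟨C, hC, heC, -, hCA⟩ := mem_brokenCircuitTops.1 he
  have hCe : C.erase e ⊆ A.erase e := subset_erase.2 ⟨hCA, notMem_erase e C⟩
  have hspan : v e ∈ span ℂ (v '' ↑(A.erase e)) :=
    span_mono (Set.image_mono (coe_subset.2 hCe)) (hC.mem_span_erase heC)
  rw [linRk_eq_linRk_erase hspan, linRk_eq_linRk_erase (A := A ∆ {e}),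
    erase_symmDiff_singleton]
  rwa [erase_symmDiff_singleton]

open scoped Classical in
theorem sum_neg_one_pow_smul_linRk_eq_sum_linNoBrokenCircuit {M : Type*} [AddCommGroup M]
    (f : ℕ → M) :
    ∑ A : Finset ι, (-1 : ℤ) ^ #A • f (linRk v A) =
      ∑ A with LinNoBrokenCircuit v lo A, (-1 : ℤ) ^ #A • f #A := by
  rw [← sum_filter_add_sum_filter_not univ (LinNoBrokenCircuit v lo)]
  have hnbc : ∀ A ∈ ({A | LinNoBrokenCircuit v lo A} : Finset _),
      (-1 : ℤ) ^ #A • f (linRk v A) = (-1 : ℤ) ^ #A • f #A := fun A hA => by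
    rw [linIndep_iff_linRk_eq_card.1 (mem_filter.1 hA).2.linIndep]
  have htops : ∀ A ∈ ({A | ¬ LinNoBrokenCircuit v lo A} : Finset _),
      (brokenCircuitTops v A).Nonempty := fun A hA => by
    rw [nonempty_iff_ne_empty, Ne, ← linNoBrokenCircuit_iff_brokenCircuitTops_eq_empty]
    exact (mem_filter.1 hA).2
  have hleast : ∀ A hA, IsLeast (brokenCircuitTops v A : Set ι)
      ((brokenCircuitTops v A).min' (htops A hA)) := fun A hA => isLeast_min' _ _
  rw [sum_congr rfl hnbc, add_eq_left]
  refine sum_involution (fun A hA => A ∆ {(brokenCircuitTops v A).min' (htops A hA)})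
    (fun A hA => ?_) (fun A hA _ => ?_) (fun A hA => ?_) (fun A hA => ?_)
  · rw [linRk_symmDiff_singleton (hleast A hA).1, neg_one_pow_card_symmDiff_singleton, neg_smul,
      add_neg_cancel]
  · exact fun h => singleton_ne_empty _ (symmDiff_eq_left.1 h)
  · rw [mem_filter, linNoBrokenCircuit_iff_brokenCircuitTops_eq_empty]
    exact ⟨mem_univ _, ne_empty_of_mem (mem_brokenCircuitTops_symmDiff (hleast A hA).1)⟩
  · rw [(isLeast_min' _ _).unique (isLeast_brokenCircuitTops_symmDiff (hleast A hA)),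
      symmDiff_symmDiff_cancel_right]

open scoped Classical in
theorem coeff_sum_linNoBrokenCircuit {N : ℕ} (hN : linRk v univ ≤ N) :
    (∑ A with LinNoBrokenCircuit v lo A, (-1 : ℤ) ^ #A • (X : ℤ[X]) ^ (N - #A)).coeff
        (N - linRk v univ) =
      (-1) ^ linRk v univ * #{S | LinBase v S ∧ LinNoBrokenCircuit v lo S} := by
  have hterm : ∀ A ∈ ({A | LinNoBrokenCircuit v lo A} : Finset _),
      ((-1 : ℤ) ^ #A • (X : ℤ[X]) ^ (N - #A)).coeff (N - linRk v univ) =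
        if LinBase v A then (-1) ^ linRk v univ else 0 := fun A hA => by
    have hind := (mem_filter.1 hA).2.linIndep
    have hle : #A ≤ linRk v univ :=
      linIndep_iff_linRk_eq_card.1 hind ▸ linRk_mono (subset_univ A)
    rw [coeff_smul, coeff_X_pow, hind.linBase_iff]
    by_cases h : #A = linRk v univ
    · simp [h]
    · have : N - linRk v univ ≠ N - #A := by omega
      simp [h, this]
  rw [finsetSum_coeff, sum_congr rfl hterm, sum_ite, sum_const_zero, add_zero, sum_const,
    filter_filter, nsmul_eq_mul, mul_comm]
  simp_rw [and_comm]

end BrokenCircuit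

namespace SimpleGraph

variable {β : Type*} (H : SimpleGraph β)

theorem range_comp_connectedComponentMk (R : Type*) :
    Set.range (fun g : H.ConnectedComponent → R => g ∘ H.connectedComponentMk) =
      {f | ∀ a b, H.Adj a b → f a = f b} := by
  ext f
  refine ⟨?_, fun hf => ⟨Quot.lift f fun a b (hab : H.Reachable a b) => ?_, rfl⟩⟩
  · rintro ⟨g, rfl⟩ a b hab
    exact congrArg g (ConnectedComponent.sound hab.reachable)
  · rw [reachable_iff_reflTransGen] at hab
    induction hab with
    | refl => rfl
    | tail _ hbc ih => exact ih.trans (hf _ _ hbc)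

theorem connectedComponentMk_surjective : Function.Surjective H.connectedComponentMk :=
  Quot.mk_surjective

theorem card_setOf_forall_adj_eq [Finite β] (R : Type*) :
    Nat.card {f : β → R | ∀ a b, H.Adj a b → f a = f b} =
      Nat.card R ^ Nat.card H.ConnectedComponent := by
  rw [← range_comp_connectedComponentMk,
    Nat.card_range_of_injective H.connectedComponentMk_surjective.injective_comp_right,
    Nat.card_fun]

theorem mem_range_funLeft_connectedComponentMk {K : Type*} [Semiring K] {f : β → K} :
    f ∈ LinearMap.range (LinearMap.funLeft K K H.connectedComponentMk) ↔
      ∀ a b, H.Adj a b → f a = f b :=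
  Set.ext_iff.1 (H.range_comp_connectedComponentMk K) f

theorem finrank_range_funLeft_connectedComponentMk [Finite β] (K : Type*) [Field K] :
    finrank K (LinearMap.range (LinearMap.funLeft K K H.connectedComponentMk)) =
      Nat.card H.ConnectedComponent := by
  have := Fintype.ofFinite H.ConnectedComponent
  rw [LinearMap.finrank_range_of_inj
      (LinearMap.funLeft_injective_of_surjective _ _ _ H.connectedComponentMk_surjective),
    Module.finrank_fintype_fun_eq_card, Nat.card_eq_fintype_card]

variable {α : Type*} [LinearOrder α] (G : SimpleGraph α)

abbrev OrderedEdge : Type _ := {p : α × α // p.1 < p.2 ∧ G.Adj p.1 p.2}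

def spanningGraph (A : Finset G.OrderedEdge) : SimpleGraph α :=
  fromRel fun a b => ∃ e ∈ A, e.1 = (a, b)

theorem forall_adj_iff_forall_orderedEdge {P : α → α → Prop} (hP : ∀ a b, P a b → P b a) :
    (∀ a b, G.Adj a b → P a b) ↔ ∀ e : G.OrderedEdge, P e.1.1 e.1.2 := by
  refine ⟨fun h e => h _ _ e.2.2, fun h a b hab => ?_⟩
  rcases lt_or_gt_of_ne hab.ne with hlt | hlt
  · exact h ⟨(a, b), hlt, hab⟩
  · exact hP _ _ (h ⟨(b, a), hlt, hab.symm⟩)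

theorem forall_adj_spanningGraph_iff {R : Type*} {A : Finset G.OrderedEdge} {f : α → R} :
    (∀ a b, (G.spanningGraph A).Adj a b → f a = f b) ↔ ∀ e ∈ A, f e.1.1 = f e.1.2 := by
  simp only [spanningGraph, fromRel_adj]
  refine ⟨fun h e he => h _ _ ⟨e.2.1.ne, Or.inl ⟨e, he, rfl⟩⟩, ?_⟩
  rintro h a b ⟨-, ⟨e, he, hab⟩ | ⟨e, he, hab⟩⟩ <;> obtain ⟨rfl, rfl⟩ := Prod.ext_iff.1 hab
  exacts [h e he, (h e he).symm]

theorem spanningGraph_univ [Fintype G.OrderedEdge] : G.spanningGraph univ = G := by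
  ext a b
  simp only [spanningGraph, fromRel_adj, mem_univ, true_and]
  refine ⟨?_, fun hab => ⟨hab.ne, ?_⟩⟩
  · rintro ⟨-, ⟨e, hab⟩ | ⟨e, hab⟩⟩ <;> obtain ⟨rfl, rfl⟩ := Prod.ext_iff.1 hab
    exacts [e.2.2, e.2.2.symm]
  · rcases lt_or_gt_of_ne hab.ne with hlt | hlt
    · exact Or.inl ⟨⟨(a, b), hlt, hab⟩, rfl⟩
    · exact Or.inr ⟨⟨(b, a), hlt, hab.symm⟩, rfl⟩

variable [Fintype α] (v : G.OrderedEdge → (α → ℂ))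

theorem linRk_add_card_connectedComponent [DecidableEq α]
    (hv : ∀ e, v e = Pi.single e.1.1 1 - Pi.single e.1.2 1) (A : Finset G.OrderedEdge) :
    linRk v A + Nat.card (G.spanningGraph A).ConnectedComponent = Fintype.card α := by
  let M : Matrix A α ℂ := fun e => v e
  have hker : LinearMap.ker M.mulVecLin =
      LinearMap.range (LinearMap.funLeft ℂ ℂ (G.spanningGraph A).connectedComponentMk) := by
    ext x
    have hMx : ∀ e, M.mulVecLin x e = x e.1.1.1 - x e.1.1.2 := fun e => by
      change v e ⬝ᵥ x = _
      rw [hv, sub_dotProduct, single_dotProduct, single_dotProduct, one_mul, one_mul]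
    rw [LinearMap.mem_ker, mem_range_funLeft_connectedComponentMk,
      forall_adj_spanningGraph_iff, funext_iff]
    simp only [hMx, Pi.zero_apply, sub_eq_zero, Subtype.forall]
  have hrange : finrank ℂ (LinearMap.range M.mulVecLin) = linRk v A := by
    rw [← Matrix.rank, Matrix.rank_eq_finrank_span_row, linRk, Set.finrank, Set.image_eq_range]
    rfl
  rw [← hrange, ← finrank_range_funLeft_connectedComponentMk _ ℂ, ← hker,
    LinearMap.finrank_range_add_finrank_ker, Module.finrank_fintype_fun_eq_card]

variable [DecidableEq α] [DecidableRel G.Adj] {v}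

theorem card_proper_fun_eq_sum (hv : ∀ e, v e = Pi.single e.1.1 1 - Pi.single e.1.2 1)
    (m : ℕ) :
    (Nat.card {f : α → Fin m // ∀ a b, G.Adj a b → f a ≠ f b} : ℤ) =
      ∑ A : Finset G.OrderedEdge, (-1 : ℤ) ^ #A * (m : ℤ) ^ (Fintype.card α - linRk v A) := by
  let S : G.OrderedEdge → Finset (α → Fin m) := fun e => {f | f e.1.1 = f e.1.2}
  have hproper : Nat.card {f : α → Fin m // ∀ a b, G.Adj a b → f a ≠ f b} =
      #(univ.inf fun e => (S e)ᶜ) := by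
    rw [Nat.card_eq_fintype_card, Fintype.card_subtype]
    congr 1
    ext f
    simp [S, Finset.mem_inf, G.forall_adj_iff_forall_orderedEdge fun _ _ => Ne.symm]
  have hmono : ∀ A : Finset G.OrderedEdge, #(A.inf S) = m ^ (Fintype.card α - linRk v A) := by
    intro A
    have hA : {f : α → Fin m | ∀ a b, (G.spanningGraph A).Adj a b → f a = f b} =
        ↑(A.inf S) := by
      ext f
      simp [Finset.mem_inf, S, forall_adj_spanningGraph_iff]
    have := G.linRk_add_card_connectedComponent v hv A
    rw [← Nat.card_eq_finsetCard, ← coe_sort_coe, ← hA, card_setOf_forall_adj_eq,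
      Nat.card_eq_fintype_card, Fintype.card_fin]
    congr 1
    omega
  rw [hproper, inclusion_exclusion_card_inf_compl, powerset_univ]
  exact sum_congr rfl fun A _ => by rw [hmono]; push_cast; rfl

end SimpleGraph

open scoped Classical in
/-- For a graph `G` on `[n]` with `k(G)` components and `r(G) = n − k(G)`, the
evaluation `(−1)^{r(G)} χ̃_G(0)`, where `χ̃_G(t) = χ_G(t)/t^{k(G)}` and `χ_G` is the
chromatic polynomial, equals the number of maximal spanning forests of `G`
(the bases of the cycle matroid of `G`) containing no broken circuit (with respect to
a fixed linear order on the edges). -/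
theorem nbc_spanning_forests_eq_chromatic (n : ℕ) (G : SimpleGraph (Fin n))
    [DecidableRel G.Adj]
    (v : {p : Fin n × Fin n // p.1 < p.2 ∧ G.Adj p.1 p.2} → (Fin n → ℂ))
    (hv : ∀ p, v p = Pi.single p.1.1 1 - Pi.single p.1.2 1)
    (lo : LinearOrder {p : Fin n × Fin n // p.1 < p.2 ∧ G.Adj p.1 p.2})
    (p q : Polynomial ℤ)
    (hp : ∀ m : ℕ, p.eval (m : ℤ) =
      Nat.card {f : Fin n → Fin m // ∀ a b, G.Adj a b → f a ≠ f b})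
    (hq : p = X ^ (Nat.card G.ConnectedComponent) * q) :
    (-1 : ℤ) ^ (n - Nat.card G.ConnectedComponent) * q.eval 0 =
      ((univ.filter fun S : Finset {p : Fin n × Fin n // p.1 < p.2 ∧ G.Adj p.1 p.2} =>
        LinBase v S ∧ LinNoBrokenCircuit v lo S).card : ℤ) := by
  set k := Nat.card G.ConnectedComponent
  have hrk : linRk v univ + k = n := by
    have := G.linRk_add_card_connectedComponent v hv univ
    rwa [G.spanningGraph_univ, Fintype.card_fin] at this
  have hp_nbc : p = ∑ A with LinNoBrokenCircuit v lo A, (-1 : ℤ) ^ #A • (X : ℤ[X]) ^ (n - #A) := by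
    rw [← sum_neg_one_pow_smul_linRk_eq_sum_linNoBrokenCircuit (v := v) (lo := lo)
      fun r => (X : ℤ[X]) ^ (n - r)]
    refine eq_of_infinite_eval_eq _ _
      (Set.infinite_of_injective_forall_mem Nat.cast_injective fun m : ℕ => ?_)
    rw [Set.mem_ofPred_eq, hp, G.card_proper_fun_eq_sum hv, eval_finsetSum, Fintype.card_fin]
    simp
  have hq0 : q.eval 0 = p.coeff k := by
    rw [hq, coeff_X_pow_mul', if_pos le_rfl, Nat.sub_self, coeff_zero_eq_eval_zero]
  rw [hq0, hp_nbc, show k = n - linRk v univ by omega,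
    coeff_sum_linNoBrokenCircuit (lo := lo) (by omega),
    show n - (n - linRk v univ) = linRk v univ by omega, ← mul_assoc, ← pow_add,
    Even.neg_one_pow ⟨_, rfl⟩, one_mul]
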